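/- There exists a positive real number z having no 'lower separation function': there is no computable partial function f : ℚ → ℚ such that for every rational a with 0 < a < z, f(a) is defined and a < f(a) < z. -/

import Mathlib

/-!
A partial function `f` can be a lower separation function for at most a nowhere dense set of
`z > 0`: if `f` works for `z` and `0 < a < f a < z`, then `f` works for no point of `(a, f a]`, and
such intervals can be found arbitrarily close below `z`. There are only countably many computable
`f`, so by the Baire category theorem the `z > 0` admitting a computable one form a meagre set,
which cannot exhaust the open set `(0, ∞)`.
-/

open Set

theorem countable_setOf_partrec {α σ : Type*} [Primcodable α] [Primcodable σ] :
    {f : α →. σ | Partrec f}.Countable := by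
  -- `Partrec f` is by definition `Nat.Partrec (toNat f)`.
  let toNat (f : α →. σ) : ℕ →. ℕ := fun n =>
    Part.bind (Encodable.decode (α := α) n) fun a => (f a).map Encodable.encode
  have hinj : Function.Injective toNat := by
    intro f g hfg
    funext a
    have h := congr_fun hfg (Encodable.encode a)
    simp only [toNat, Encodable.encodek, Part.coe_some, Part.bind_some] at h
    ext x
    simpa only [Part.mem_map_iff, Encodable.encode_inj, exists_eq_right] using
      Part.ext_iff.1 h (Encodable.encode x)
  have hnat : {g : ℕ →. ℕ | Nat.Partrec g}.Countable :=
    (countable_range Nat.Partrec.Code.eval).mono fun g hg =>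
      Nat.Partrec.Code.exists_code.1 hg
  exact hnat.preimage hinj

def IsLowerSeparationFunction (f : ℚ →. ℚ) (z : ℝ) : Prop :=
  ∀ a : ℚ, 0 < (a : ℝ) → (a : ℝ) < z → ∃ b ∈ f a, (a : ℝ) < (b : ℝ) ∧ (b : ℝ) < z

theorem IsLowerSeparationFunction.notMem_Ioc {f : ℚ →. ℚ} {a b : ℚ} {z : ℝ}
    (hf : IsLowerSeparationFunction f z) (ha : 0 < (a : ℝ)) (hb : b ∈ f a) :
    z ∉ Ioc (a : ℝ) b := by
  rintro ⟨haz, hzb⟩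
  obtain ⟨b', hb', -, hb'z⟩ := hf a ha haz
  rw [Part.mem_unique hb' hb] at hb'z
  exact hzb.not_gt hb'z

theorem isNowhereDense_setOf_isLowerSeparationFunction (f : ℚ →. ℚ) :
    IsNowhereDense {z : ℝ | 0 < z ∧ IsLowerSeparationFunction f z} := by
  set S := {z : ℝ | 0 < z ∧ IsLowerSeparationFunction f z}
  rw [isNowhereDense_iff_forall_notMem_nhds]
  rintro z ⟨hz, hfz⟩ hcl
  obtain ⟨l, hlz, hl⟩ := mem_nhdsLT_iff_exists_Ioo_subset.1 (mem_nhdsWithin_of_mem_nhds hcl)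
  obtain ⟨a, hla, haz⟩ := exists_rat_btwn (max_lt hlz hz)
  have ha : 0 < (a : ℝ) := (le_max_right _ _).trans_lt hla
  obtain ⟨b, hb, hab, hbz⟩ := hfz a ha haz
  have hsub : Ioo (a : ℝ) b ⊆ closure S :=
    (Ioo_subset_Ioo ((le_max_left _ _).trans hla.le) hbz.le).trans hl
  have hdisj : Disjoint S (Ioo (a : ℝ) b) :=
    disjoint_right.2 fun y hy hyS => hyS.2.notMem_Ioc ha hb (Ioo_subset_Ioc_self hy)
  exact (nonempty_Ioo.2 hab).ne_empty ((hdisj.closure_left isOpen_Ioo).eq_bot_of_ge hsub)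

theorem exists_real_without_lower_separation_function :
    ∃ z : ℝ, 0 < z ∧
      ¬ ∃ f : ℚ →. ℚ, Partrec f ∧
        ∀ a : ℚ, 0 < (a : ℝ) → (a : ℝ) < z →
          ∃ b ∈ f a, (a : ℝ) < (b : ℝ) ∧ (b : ℝ) < z := by
  by_contra! h
  have hcover : Ioi (0 : ℝ) ⊆
      ⋃ f ∈ {f : ℚ →. ℚ | Partrec f}, {z | 0 < z ∧ IsLowerSeparationFunction f z} := by
    intro z hz
    obtain ⟨f, hf, hfz⟩ := h z hz
    exact mem_biUnion hf ⟨hz, hfz⟩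
  have hmeagre := isMeagre_biUnion countable_setOf_partrec fun f _ =>
    (isNowhereDense_setOf_isLowerSeparationFunction f).isMeagre
  exact not_isMeagre_of_isOpen isOpen_Ioi nonempty_Ioi (hmeagre.mono hcover)
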